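/- arXiv:2407.06246 — 2 statements merged into one kernel-verified Lean document; each statement's English description precedes it below -/
import Mathlib

section
/- For every column-player mixed strategy q for the game with matrix A, there exists a row i ∈ Fin 3 such that ∑_{j ∈ Fin 6} A i j * q j ≥ 10/3. -/
open Finset

/-- J.D. Williams' zero-sum game payoff matrix. -/
noncomputable def A : Matrix (Fin 3) (Fin 6) ℝ :=
  !![4, 3, 3, 2, 2, 6;
     0, 7, 3, 6, 2, 2;
     6, 0, 4, 2, 6, 2]

theorem stmt_6 (q : Fin 6 → ℝ) (hq : ∀ j, 0 ≤ q j) (hq1 : ∑ j, q j = 1) :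
    ∃ i : Fin 3, 10/3 ≤ ∑ j, A i j * q j := by
  by_contra h
  push_neg at h
  have e05 : (![4, 3, 3, 2, 2, 6] : Fin 6 → ℝ) 5 = 6 := rfl
  have e15 : (![0, 7, 3, 6, 2, 2] : Fin 6 → ℝ) 5 = 2 := rfl
  have e25 : (![6, 0, 4, 2, 6, 2] : Fin 6 → ℝ) 5 = 2 := rfl
  have hsum : ∑ i : Fin 3, ∑ j, A i j * q j = 10 := by
    rw [Fin.sum_univ_six] at hq1
    simp [A, Fin.sum_univ_three, Fin.sum_univ_six, e05, e15, e25, Matrix.vecHead, Matrix.vecTail]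
    linarith
  have h0 := h 0
  have h1 := h 1
  have h2 := h 2
  rw [Fin.sum_univ_three] at hsum
  linarith
end

section
/- For every row-player mixed strategy p for the game with matrix A, there exists a column j ∈ Fin 6 such that ∑_{i ∈ Fin 3} p i * A i j ≤ 10/3. -/
open Finset

theorem stmt_7 (p : Fin 3 → ℝ) (hp : ∀ i, 0 ≤ p i) (hp1 : ∑ i, p i = 1) :
    ∃ j : Fin 6, ∑ i, p i * A i j ≤ 10/3 := by
  by_contra h
  push_neg at h
  have h0 := h 0
  have h1 := h 1
  have h4 := h 4
  simp [Fin.sum_univ_three, A, Matrix.cons_val_zero, Matrix.cons_val_one] at h0 h1 h4 hp1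
  linarith
end
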